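/- Let G be a simple graph on a finite vertex type V, let w : V → ℕ and c : V → ℕ with w(V) > 0, and let S ⊆ V be such that every connected component H of the induced subgraph of G on V \ S satisfies w(H) ≤ w(V)/2. Let λ = 6 + 2√5. Then there exists a partition (A, S, B) of V such that no edge of G joins a vertex of A to a vertex of B, w(A ∪ S) > 0, w(B ∪ S) > 0, and c(S) / (w(A ∪ S) · w(B ∪ S)) ≤ λ · c(S) / w(V)². In particular, the minimum ratio c(S') / (w(A' ∪ S') · w(B' ∪ S')) over all partitions (A', S', B') of V with no edge joining A' to B' and with w(A' ∪ S') > 0 and w(B' ∪ S') > 0 is at most λ · c(S) / w(V)². -/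
import Mathlib


open scoped Classical

/-- The total value `Σ_{v ∈ F} f v` of a set of vertices `F`. -/
noncomputable def setWeight {V : Type*} [Fintype V] (f : V → ℕ) (F : Set V) : ℕ :=
  ∑ v ∈ F.toFinset, f v

/-- The total weight of the connected component `C` of the subgraph of `G` induced on the
complement of `S` (i.e. of a component of `G − S`). -/
noncomputable def compWeight {V : Type*} [Fintype V] (G : SimpleGraph V) (S : Set V)
    (w : V → ℕ) (C : (G.induce Sᶜ).ConnectedComponent) : ℕ :=
  ∑ v : ↥Sᶜ, if (G.induce Sᶜ).connectedComponentMk v = C then w ↑v else 0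

/-- Greedy subset-sum selection: if the entries are nonnegative, bounded by `d`, and sum to
more than `t ≥ 0`, then some subset has sum in `(t - d, t]`. -/
lemma exists_subset_sum_near {ι : Type*} (f : ι → ℝ) (d t : ℝ)
    (hf : ∀ i, 0 ≤ f i) (hd : ∀ i, f i ≤ d) (ht : 0 ≤ t) (u : Finset ι)
    (h : t < ∑ i ∈ u, f i) :
    ∃ T ⊆ u, t - d < ∑ i ∈ T, f i ∧ ∑ i ∈ T, f i ≤ t := by
  classical
  induction u using Finset.induction_on with
  | empty => simp at h; linarith
  | @insert i u hi ih =>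
    by_cases h' : t < ∑ j ∈ u, f j
    · obtain ⟨T, hT, h1, h2⟩ := ih h'
      exact ⟨T, hT.trans (Finset.subset_insert _ _), h1, h2⟩
    · push_neg at h'
      refine ⟨u, Finset.subset_insert _ _, ?_, h'⟩
      rw [Finset.sum_insert hi] at h
      have := hd i
      linarith

set_option maxHeartbeats 2000000 in
/-- If every connected component `H` of `G − S` satisfies `w(H) ≤ w(V)/2` and
`w(V) > 0`, then with `λ = 6 + 2√5` there is a partition `(A, S, B)` of `V` (a vertex cut:
no edge joins `A` to `B`) with `w(A ∪ S) > 0`, `w(B ∪ S) > 0` and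
`c(S)/(w(A ∪ S)·w(B ∪ S)) ≤ λ·c(S)/w(V)²`; in particular the minimum ratio over all vertex
cuts of `G` is at most `λ·c(S)/w(V)²`. -/
theorem min_ratio_vertex_cut_le {V : Type*} [Fintype V]
    (G : SimpleGraph V) (w c : V → ℕ) (S : Set V)
    (hw : 0 < ∑ v : V, w v)
    (hsep : ∀ C : (G.induce Sᶜ).ConnectedComponent,
      (compWeight G S w C : ℝ) ≤ (∑ v : V, w v : ℕ) / 2) :
    ∃ A B : Set V,
      Disjoint A S ∧ Disjoint A B ∧ Disjoint S B ∧ A ∪ S ∪ B = Set.univ ∧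
      (∀ a ∈ A, ∀ b ∈ B, ¬ G.Adj a b) ∧
      0 < setWeight w (A ∪ S) ∧ 0 < setWeight w (B ∪ S) ∧
      (setWeight c S : ℝ) / ((setWeight w (A ∪ S) : ℝ) * (setWeight w (B ∪ S) : ℝ)) ≤
        (6 + 2 * Real.sqrt 5) * (setWeight c S : ℝ) / ((∑ v : V, w v : ℕ) : ℝ) ^ 2 := by
  classical
  set W : ℕ := ∑ v : V, w v with hW
  set s : ℕ := setWeight w S with hs
  set H := G.induce Sᶜ with hH
  set g : H.ConnectedComponent → ℕ := fun C => compWeight G S w C with hg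
  -- total weight decomposition
  have hsub : ∑ v ∈ Sᶜ.toFinset, w v = ∑ v : ↥Sᶜ, w ↑v :=
    Finset.sum_subtype _ (by simp) _
  have hcompsum : ∑ C : H.ConnectedComponent, g C = ∑ v : ↥Sᶜ, w ↑v := by
    rw [show (∑ C : H.ConnectedComponent, g C) =
        ∑ C : H.ConnectedComponent, ∑ v : ↥Sᶜ,
          (if H.connectedComponentMk v = C then w ↑v else 0) from rfl,
      Finset.sum_comm]
    simp [Finset.sum_ite_eq]
  have htot : W = s + ∑ C : H.ConnectedComponent, g C := by
    rw [hcompsum, ← hsub, hW, hs, setWeight]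
    rw [Set.toFinset_compl]
    exact (Finset.sum_add_sum_compl S.toFinset w).symm
  -- weight of a union (image of a family of components) with S
  have hweight : ∀ T : Finset H.ConnectedComponent,
      setWeight w ((Subtype.val '' {u : ↥Sᶜ | H.connectedComponentMk u ∈ T}) ∪ S)
        = (∑ C ∈ T, g C) + s := by
    intro T
    have hdisj : Disjoint ((Subtype.val '' {u : ↥Sᶜ | H.connectedComponentMk u ∈ T}) : Set V) S := by
      rw [Set.disjoint_left]
      rintro v ⟨u, _, rfl⟩ hvS
      exact u.2 hvS
    rw [setWeight, Set.toFinset_union, Finset.sum_union (by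
      rw [Finset.disjoint_left]
      intro v hv hv'
      rw [Set.mem_toFinset] at hv hv'
      exact Set.disjoint_left.mp hdisj hv hv')]
    congr 1
    rw [Set.toFinset_image, Finset.sum_image (fun a _ b _ h => Subtype.ext h)]
    have : ∑ u ∈ {u : ↥Sᶜ | H.connectedComponentMk u ∈ T}.toFinset, w ↑u
        = ∑ u : ↥Sᶜ, if H.connectedComponentMk u ∈ T then w ↑u else 0 := by
      rw [Set.toFinset_setOf, Finset.sum_filter]
    rw [this]
    rw [show (∑ C ∈ T, g C) = ∑ C ∈ T, ∑ v : ↥Sᶜ,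
          (if H.connectedComponentMk v = C then w ↑v else 0) from rfl,
      Finset.sum_comm]
    congr 1
    ext u
    rw [Finset.sum_ite_eq]
  -- choose the subset T of components
  have hg0 : ∀ C, (0:ℝ) ≤ (g C : ℝ) := fun C => Nat.cast_nonneg _
  have hgd : ∀ C, (g C : ℝ) ≤ (W : ℝ) / 2 := fun C => hsep C
  set M : ℝ := ∑ C : H.ConnectedComponent, (g C : ℝ) with hM
  have hMnn : 0 ≤ M := Finset.sum_nonneg fun C _ => hg0 C
  have hMs : (W : ℝ) = (s : ℝ) + M := by
    rw [hM, ← Nat.cast_sum]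
    exact_mod_cast congrArg (Nat.cast : ℕ → ℝ) htot
  have hWpos : (0:ℝ) < (W:ℝ) := by exact_mod_cast hw
  -- key claim: a subset T with both sides of weight ≥ W/4 and product ≥ W²/8
  obtain ⟨T, ha, hb, hab⟩ : ∃ T : Finset H.ConnectedComponent,
      (W:ℝ)/4 ≤ (∑ C ∈ T, g C : ℕ) + (s:ℝ) ∧
      (W:ℝ)/4 ≤ (∑ C ∈ Tᶜ, g C : ℕ) + (s:ℝ) ∧
      (W:ℝ)^2/8 ≤ ((∑ C ∈ T, g C : ℕ) + (s:ℝ)) * ((∑ C ∈ Tᶜ, g C : ℕ) + (s:ℝ)) := by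
    have hsplitTc : ∀ T : Finset H.ConnectedComponent,
        ((∑ C ∈ Tᶜ, g C : ℕ) : ℝ) = M - ((∑ C ∈ T, g C : ℕ) : ℝ) := by
      intro T
      have h := Finset.sum_add_sum_compl T g
      have h2 : ((∑ C ∈ T, g C : ℕ) : ℝ) + ((∑ C ∈ Tᶜ, g C : ℕ) : ℝ) = M := by
        rw [← Nat.cast_add, h, hM]; exact Nat.cast_sum _ _
      linarith
    have hs0 : (0:ℝ) ≤ (s:ℝ) := Nat.cast_nonneg _
    by_cases hcase : M ≤ M/2 + (W:ℝ)/4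
    · -- s ≥ W/2 : take all components
      have hu : ((∑ C ∈ (Finset.univ : Finset H.ConnectedComponent), g C : ℕ):ℝ) = M := by
        rw [Nat.cast_sum]
      have he : ((∑ C ∈ (Finset.univ : Finset H.ConnectedComponent)ᶜ, g C : ℕ):ℝ) = 0 := by
        simp
      refine ⟨Finset.univ, ?_, ?_, ?_⟩
      · rw [hu]; linarith
      · rw [he]; linarith
      · rw [hu, he]; nlinarith
    · push_neg at hcase
      obtain ⟨T, -, h1, h2⟩ := exists_subset_sum_near (fun C => (g C : ℝ)) ((W:ℝ)/2)
        (M/2 + (W:ℝ)/4) hg0 hgd (by positivity) Finset.univ (by simpa [← hM] using hcase)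
      have hTs : ((∑ C ∈ T, g C : ℕ) : ℝ) = ∑ C ∈ T, (g C : ℝ) := Nat.cast_sum _ _
      rw [← hTs] at h1 h2
      refine ⟨T, ?_, ?_, ?_⟩
      · linarith
      · rw [hsplitTc T]; linarith
      · rw [hsplitTc T]
        nlinarith [mul_nonneg (by linarith : (0:ℝ) ≤ ((∑ C ∈ T, g C : ℕ):ℝ) + s - W/4)
          (by linarith : (0:ℝ) ≤ M - ((∑ C ∈ T, g C : ℕ):ℝ) + s - W/4)]
  -- define the sets
  set A : Set V := Subtype.val '' {u : ↥Sᶜ | H.connectedComponentMk u ∈ T} with hA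
  set B : Set V := Subtype.val '' {u : ↥Sᶜ | H.connectedComponentMk u ∈ Tᶜ} with hB
  have hwA : setWeight w (A ∪ S) = (∑ C ∈ T, g C) + s := hweight T
  have hwB : setWeight w (B ∪ S) = (∑ C ∈ Tᶜ, g C) + s := hweight Tᶜ
  have hApos : (0:ℝ) < (setWeight w (A ∪ S) : ℝ) := by
    rw [hwA, Nat.cast_add]; linarith
  have hBpos : (0:ℝ) < (setWeight w (B ∪ S) : ℝ) := by
    rw [hwB, Nat.cast_add]; linarith
  refine ⟨A, B, ?_, ?_, ?_, ?_, ?_, ?_, ?_, ?_⟩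
  · rw [Set.disjoint_left]; rintro v ⟨u, _, rfl⟩ hvS; exact u.2 hvS
  · rw [Set.disjoint_left]
    rintro v ⟨u, hu, rfl⟩ ⟨u', hu', huv⟩
    rw [show u' = u from Subtype.ext huv] at hu'
    exact (Finset.mem_compl.mp hu') hu
  · rw [Set.disjoint_right]; rintro v ⟨u, _, rfl⟩ hvS; exact u.2 hvS
  · ext v
    simp only [Set.mem_univ, iff_true, Set.mem_union]
    by_cases hvS : v ∈ S
    · exact Or.inl (Or.inr hvS)
    · by_cases hT : H.connectedComponentMk ⟨v, hvS⟩ ∈ T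
      · exact Or.inl (Or.inl ⟨⟨v, hvS⟩, hT, rfl⟩)
      · exact Or.inr ⟨⟨v, hvS⟩, by simpa using hT, rfl⟩
  · rintro a ⟨u, hu, rfl⟩ b ⟨u', hu', rfl⟩ hadj
    have : H.Adj u u' := by
      rw [hH]; exact hadj
    have heq := SimpleGraph.ConnectedComponent.connectedComponentMk_eq_of_adj this
    have hu2 : H.connectedComponentMk u ∈ T := hu
    have hu'2 : H.connectedComponentMk u' ∈ Tᶜ := hu'
    rw [heq] at hu2
    exact Finset.mem_compl.mp hu'2 hu2
  · exact_mod_cast hApos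
  · exact_mod_cast hBpos
  · rw [div_le_div_iff₀ (by positivity) (by positivity)]
    have h5 : (1:ℝ) ≤ Real.sqrt 5 := by
      rw [show (1:ℝ) = Real.sqrt 1 by simp]
      exact Real.sqrt_le_sqrt (by norm_num)
    have hcs : (0:ℝ) ≤ (setWeight c S : ℝ) := Nat.cast_nonneg _
    have hprod : (W:ℝ)^2/8 ≤ (setWeight w (A ∪ S) : ℝ) * (setWeight w (B ∪ S) : ℝ) := by
      rw [hwA, hwB]; push_cast; convert hab using 2 <;> push_cast <;> ring
    have hint2 : (0:ℝ) ≤ (2*Real.sqrt 5 - 2) *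
        ((setWeight c S : ℝ) * ((setWeight w (A ∪ S) : ℝ) * (setWeight w (B ∪ S) : ℝ))) :=
      mul_nonneg (by linarith) (mul_nonneg hcs (by positivity))
    nlinarith [mul_le_mul_of_nonneg_left hprod hcs, hint2]
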